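/- arXiv:1309.4837 — 3 statements merged into one kernel-verified Lean document; each statement's English description precedes it below -/
import Mathlib

section
/- If G is an edge-maximal k-degenerate graph on n > k vertices (i.e., adding any missing edge to G destroys k-degeneracy), then the minimum degree of G equals k. -/
open Matrix Finset BigOperators

/-- A graph is `k`-degenerate if every nonempty (induced) subgraph has a vertex
of degree at most `k` within it. -/
def SimpleGraph.Degenerate {V : Type*} (k : ℕ) (G : SimpleGraph V) : Prop :=
  ∀ s : Finset V, s.Nonempty → ∃ v ∈ s, {u ∈ (s : Set V) | G.Adj v u}.ncard ≤ k

/-- `SGraph n k`: the join of a complete graph on the first `k` vertices with an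
independent set on the remaining `n - k` vertices (the graph `S_{n,k}`). -/
def SGraph (n k : ℕ) : SimpleGraph (Fin n) where
  Adj u v := u ≠ v ∧ ((u : ℕ) < k ∨ (v : ℕ) < k)
  symm := ⟨by intro u v h; exact ⟨h.1.symm, h.2.symm⟩⟩
  loopless := ⟨by intro u h; exact h.1 rfl⟩

instance (n k : ℕ) : DecidableRel (SGraph n k).Adj := fun u v => by
  unfold SGraph; infer_instance

/-- The signless Laplacian `Q = D + A` as a real matrix. -/
noncomputable def signlessLaplacian {n : ℕ} (G : SimpleGraph (Fin n)) :
    Matrix (Fin n) (Fin n) ℝ :=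
  letI : DecidableRel G.Adj := Classical.decRel _
  Matrix.diagonal (fun v => (G.degree v : ℝ)) + G.adjMatrix ℝ

theorem signlessLaplacian_isHermitian {n : ℕ} (G : SimpleGraph (Fin n)) :
    (signlessLaplacian G).IsHermitian := by
  letI : DecidableRel G.Adj := Classical.decRel _
  unfold signlessLaplacian
  refine (Matrix.isHermitian_diagonal _).add ?_
  rw [Matrix.IsHermitian, Matrix.conjTranspose_eq_transpose_of_trivial]
  exact SimpleGraph.isSymm_adjMatrix G

theorem adjMatrix_isHermitian {n : ℕ} (G : SimpleGraph (Fin n)) [DecidableRel G.Adj] :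
    (G.adjMatrix ℝ).IsHermitian := by
  rw [Matrix.IsHermitian, Matrix.conjTranspose_eq_transpose_of_trivial]
  exact SimpleGraph.isSymm_adjMatrix G

/-- The largest adjacency eigenvalue `μ(G)`. -/
noncomputable def muIndex {n : ℕ} (G : SimpleGraph (Fin n)) : ℝ :=
  letI : DecidableRel G.Adj := Classical.decRel _
  ⨆ i, (adjMatrix_isHermitian G).eigenvalues i

/-- The largest signless Laplacian eigenvalue `q(G)` (the `Q`-index). -/
noncomputable def qIndex {n : ℕ} (G : SimpleGraph (Fin n)) : ℝ :=
  ⨆ i, (signlessLaplacian_isHermitian G).eigenvalues i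

/-!
A `k`-degenerate graph on the whole vertex set has a vertex of degree at most `k`. Conversely,
if some vertex `v` had degree `< k`, then `n > k` leaves a non-neighbour `u ≠ v`, and adding the
edge `vu` keeps the graph `k`-degenerate: a vertex set containing `v` still sees `v` with degree
at most `deg v + 1 ≤ k`, and one avoiding `v` does not see the new edge at all. This contradicts
maximality.
-/

namespace SimpleGraph

variable {V : Type*} {G : SimpleGraph V} {k : ℕ}

lemma ncard_neighborSet_eq_degree (v : V) [Fintype (G.neighborSet v)] :
    (G.neighborSet v).ncard = G.degree v := by
  rw [Set.ncard_eq_toFinset_card', ← neighborFinset_def, card_neighborFinset_eq_degree]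

lemma Degenerate.exists_degree_le [Fintype V] [Nonempty V] [DecidableRel G.Adj]
    (hG : G.Degenerate k) : ∃ v, G.degree v ≤ k := by
  obtain ⟨v, -, hv⟩ := hG univ univ_nonempty
  refine ⟨v, ?_⟩
  rw [coe_univ, Set.sep_univ] at hv
  rwa [← ncard_neighborSet_eq_degree]

lemma Degenerate.sup_edge (hG : G.Degenerate k) {v : V} [Fintype (G.neighborSet v)]
    (hv : G.degree v < k) (u : V) : (G ⊔ edge v u).Degenerate k := by
  intro s hs
  by_cases hvs : v ∈ s
  · refine ⟨v, hvs, ?_⟩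
    have hsub : {w ∈ (s : Set V) | (G ⊔ edge v u).Adj v w} ⊆ insert u (G.neighborSet v) := by
      intro w hw
      simp only [Set.mem_ofPred_eq, sup_adj, edge_adj] at hw
      simp only [Set.mem_insert_iff, mem_neighborSet]
      tauto
    calc {w ∈ (s : Set V) | (G ⊔ edge v u).Adj v w}.ncard
        ≤ (insert u (G.neighborSet v)).ncard := Set.ncard_le_ncard hsub (Set.toFinite _)
      _ ≤ G.degree v + 1 := by
        rw [← ncard_neighborSet_eq_degree]; exact Set.ncard_insert_le _ _
      _ ≤ k := hv
  · obtain ⟨w, hw, hwk⟩ := hG s hs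
    refine ⟨w, hw, le_of_eq_of_le (congrArg Set.ncard ?_) hwk⟩
    ext x
    simp only [Set.mem_ofPred_eq, sup_adj, edge_adj, mem_coe]
    grind

end SimpleGraph

theorem stmt2 (n k : ℕ) (hnk : k < n) (G : SimpleGraph (Fin n)) [DecidableRel G.Adj]
    (hG : G.Degenerate k)
    (hmax : ∀ H : SimpleGraph (Fin n), G < H → ¬ H.Degenerate k) :
    G.minDegree = k := by
  have : Nonempty (Fin n) := ⟨⟨k, hnk⟩⟩
  obtain ⟨v, hv⟩ := hG.exists_degree_le
  refine le_antisymm ((G.minDegree_le_degree v).trans hv)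
    (G.le_minDegree_of_forall_le_degree k fun v => ?_)
  by_contra! hlt
  have hnu : ¬ G.IsUniversal v :=
    (G.degree_lt_card_sub_one v).1 (by simp only [Fintype.card_fin]; omega)
  obtain ⟨u, hvu, hnadj⟩ : ∃ u, v ≠ u ∧ ¬ G.Adj v u := by simpa [SimpleGraph.IsUniversal] using hnu
  exact hmax _ (G.lt_sup_edge v u hvu hnadj) (hG.sup_edge hlt u)
end

section
/- If G is a graph of order n with m edges, maximum degree Δ and minimum degree δ, and if 2m ≥ Δ² + Δ + (n − 1 − Δ)δ, then (1/2)·(Δ + 2δ − 1 + sqrt((Δ + 2δ − 1)² + 16m − 8(n − 1 + Δ)δ)) ≥ 2Δ. -/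
open Matrix Finset BigOperators

theorem stmt10_general (n m Δ δ : ℝ)
    (hm : 2 * m ≥ Δ ^ 2 + Δ + (n - 1 - Δ) * δ) :
    2 * Δ ≤ (1 / 2) * (Δ + 2 * δ - 1 +
      Real.sqrt ((Δ + 2 * δ - 1) ^ 2 + 16 * m - 8 * (n - 1 + Δ) * δ)) := by
  have hradicand : (Δ + 2 * δ - 1) ^ 2 + 16 * m - 8 * (n - 1 + Δ) * δ =
      (3 * Δ - 2 * δ + 1) ^ 2 + 8 * (2 * m - (Δ ^ 2 + Δ + (n - 1 - Δ) * δ)) := by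
    ring
  have hsqrt : 3 * Δ - 2 * δ + 1 ≤
      Real.sqrt ((Δ + 2 * δ - 1) ^ 2 + 16 * m - 8 * (n - 1 + Δ) * δ) :=
    Real.le_sqrt_of_sq_le (by rw [hradicand]; linarith)
  linarith

theorem stmt10 (n m Δ δ : ℝ) (h1 : δ ≤ 2 * m / n) (h2 : 2 * m / n ≤ Δ)
    (h3 : Δ ≤ n - 1)
    (hrad : 0 ≤ (Δ + 2 * δ - 1) ^ 2 + 16 * m - 8 * (n - 1 + Δ) * δ)
    (hm : 2 * m ≥ Δ ^ 2 + Δ + (n - 1 - Δ) * δ) :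
    2 * Δ ≤ (1 / 2) * (Δ + 2 * δ - 1 +
      Real.sqrt ((Δ + 2 * δ - 1) ^ 2 + 16 * m - 8 * (n - 1 + Δ) * δ)) :=
  stmt10_general n m Δ δ hm
end

section
/- Let G be a graph of order n with m edges, maximum degree Δ and minimum degree δ, and let q = q(G) be the largest signless Laplacian eigenvalue. Then q² − (Δ + 2δ − 1)q − 4m + 2(n − 1 + Δ)δ ≤ 0. -/
open Matrix Finset BigOperators

/-!
As `Q` is entrywise nonnegative, `q` has an eigenvector `y ≥ 0`, `y ≠ 0`. Let `d` be the degree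
vector and `𝟙` the all-ones vector.
As `Q` is symmetric, `q ⟨f, y⟩ = ⟨Q f, y⟩` for every `f`. Since `Q 𝟙 = 2d`, this gives
`q ⟨𝟙, y⟩ = 2 ⟨d, y⟩`. Since `(Q d)_v = d_v² + ∑_{u ∼ v} d_u`, with `d_v² ≤ (Δ + δ) d_v - Δδ` and
`∑_{u ∼ v} d_u ≤ 2m - d_v - (n - 1 - d_v) δ`, we get `Q d ≤ (Δ + 2δ - 1) d + (2m - (n - 1 + Δ) δ) 𝟙`
entrywise, hence `q ⟨d, y⟩ ≤ (Δ + 2δ - 1) ⟨d, y⟩ + (2m - (n - 1 + Δ) δ) ⟨𝟙, y⟩`.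
Eliminating `⟨d, y⟩` and dividing by `⟨𝟙, y⟩ > 0` gives the inequality.
-/

namespace Matrix

open Unitary in
open scoped ComplexOrder in
theorem IsHermitian.posSemidef_smul_one_sub {ι 𝕜 : Type*} [Fintype ι] [DecidableEq ι] [RCLike 𝕜]
    {A : Matrix ι ι 𝕜} (hA : A.IsHermitian) {q : ℝ} (hq : ∀ i, hA.eigenvalues i ≤ q) :
    ((q : 𝕜) • (1 : Matrix ι ι 𝕜) - A).PosSemidef := by
  have hconj : (q : 𝕜) • (1 : Matrix ι ι 𝕜) - A = conjStarAlgAut 𝕜 _ hA.eigenvectorUnitary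
      (diagonal fun i => ((q - hA.eigenvalues i : ℝ) : 𝕜)) := by
    conv_lhs => rw [hA.spectral_theorem]
    rw [← map_one (conjStarAlgAut 𝕜 _ hA.eigenvectorUnitary), ← map_smul, ← map_sub,
      smul_one_eq_diagonal, diagonal_sub]
    congr 2
    ext i
    simp
  rw [hconj, conjStarAlgAut_apply]
  exact PosSemidef.mul_mul_conjTranspose_same
    (posSemidef_diagonal_iff.2 fun i => by simpa using hq i) _

theorem dotProduct_mulVec_le_abs {ι : Type*} [Fintype ι] {A : Matrix ι ι ℝ}
    (hA : ∀ i j, 0 ≤ A i j) (x : ι → ℝ) : x ⬝ᵥ A *ᵥ x ≤ |x| ⬝ᵥ A *ᵥ |x| := by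
  simp only [dotProduct, mulVec, Finset.mul_sum, Pi.abs_apply]
  refine Finset.sum_le_sum fun i _ => Finset.sum_le_sum fun j _ => ?_
  calc x i * (A i j * x j) = A i j * (x i * x j) := by ring
    _ ≤ A i j * (|x i| * |x j|) := by
      rw [← abs_mul]; exact mul_le_mul_of_nonneg_left (le_abs_self _) (hA i j)
    _ = |x i| * (A i j * |x j|) := by ring

/-- Taking entrywise absolute values of a top eigenvector `x` does not decrease `xᵀAx`, so `|x|`
still maximises the Rayleigh quotient, i.e. lies in the kernel of the positive semidefinite
`q • 1 - A`. -/
theorem IsHermitian.exists_nonneg_mulVec_eq_iSup_eigenvalues_smul {ι : Type*} [Fintype ι]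
    [DecidableEq ι] [Nonempty ι] {A : Matrix ι ι ℝ} (hA : A.IsHermitian)
    (hA_nonneg : ∀ i j, 0 ≤ A i j) :
    ∃ y : ι → ℝ, 0 ≤ y ∧ y ≠ 0 ∧ A *ᵥ y = (⨆ i, hA.eigenvalues i) • y := by
  obtain ⟨i₀, hi₀⟩ := exists_eq_ciSup_of_finite (f := hA.eigenvalues)
  set q := ⨆ i, hA.eigenvalues i
  set x : ι → ℝ := ⇑(hA.eigenvectorBasis i₀)
  have hx : x ≠ 0 := fun h => hA.eigenvectorBasis.orthonormal.ne_zero i₀ (by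
    ext i; exact congrFun h i)
  have hAx : A *ᵥ x = q • x := hi₀ ▸ hA.mulVec_eigenvectorBasis i₀
  have hP : (q • 1 - A).PosSemidef := by
    simpa using hA.posSemidef_smul_one_sub fun i =>
      le_ciSup (Set.finite_range _).bddAbove i
  have hquad : |x| ⬝ᵥ (q • 1 - A) *ᵥ |x| = 0 := by
    refine le_antisymm ?_ (by simpa using hP.dotProduct_mulVec_nonneg |x|)
    have habs : |x| ⬝ᵥ |x| = x ⬝ᵥ x := by
      simp only [dotProduct, Pi.abs_apply, abs_mul_abs_self]
    have hle := dotProduct_mulVec_le_abs hA_nonneg x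
    rw [hAx, dotProduct_smul, smul_eq_mul, ← habs] at hle
    rw [sub_mulVec, dotProduct_sub, smul_mulVec, one_mulVec, dotProduct_smul, smul_eq_mul]
    linarith
  refine ⟨|x|, abs_nonneg x, fun h => hx (funext fun i => abs_eq_zero.mp (congrFun h i)), ?_⟩
  have hker := (hP.dotProduct_mulVec_zero_iff |x|).mp (by simpa using hquad)
  rw [sub_mulVec, smul_mulVec, one_mulVec, sub_eq_zero] at hker
  exact hker.symm

theorem mulVec_dotProduct_of_mulVec_eq_smul {ι : Type*} [Fintype ι] {A : Matrix ι ι ℝ}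
    (hA : A.IsHermitian) {q : ℝ} {y : ι → ℝ} (hy : A *ᵥ y = q • y) (f : ι → ℝ) :
    A *ᵥ f ⬝ᵥ y = q * (f ⬝ᵥ y) := by
  have hsymm : Aᵀ = A := by simpa using hA.eq
  rw [← vecMul_transpose, hsymm, ← dotProduct_mulVec, hy, dotProduct_smul, smul_eq_mul]

theorem IsHermitian.sq_sub_mul_sub_two_mul_nonpos {ι : Type*} [Fintype ι] {A : Matrix ι ι ℝ}
    (hA : A.IsHermitian) {q a c : ℝ} {y d : ι → ℝ} (hy_nonneg : 0 ≤ y) (hy_ne : y ≠ 0)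
    (hAy : A *ᵥ y = q • y) (hA_one : A *ᵥ 1 = (2 : ℝ) • d) (hA_d : A *ᵥ d ≤ a • d + c • 1) :
    q ^ 2 - a * q - 2 * c ≤ 0 := by
  have hs : 0 < 1 ⬝ᵥ y := by
    obtain ⟨v, hv⟩ := Function.ne_iff.mp hy_ne
    rw [one_dotProduct]
    exact sum_pos' (fun i _ => hy_nonneg i) ⟨v, mem_univ v, (hy_nonneg v).lt_of_ne' hv⟩
  have h_one : q * (1 ⬝ᵥ y) = 2 * (d ⬝ᵥ y) := by
    rw [← mulVec_dotProduct_of_mulVec_eq_smul hA hAy, hA_one, smul_dotProduct, smul_eq_mul]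
  have h_d : q * (d ⬝ᵥ y) ≤ a * (d ⬝ᵥ y) + c * (1 ⬝ᵥ y) := by
    rw [← mulVec_dotProduct_of_mulVec_eq_smul hA hAy]
    calc _ ≤ (a • d + c • 1) ⬝ᵥ y := dotProduct_le_dotProduct_of_nonneg_right hA_d hy_nonneg
      _ = _ := by simp only [add_dotProduct, smul_dotProduct, smul_eq_mul]
  have h_elim : (q ^ 2 - a * q - 2 * c) * (1 ⬝ᵥ y) =
      2 * (q * (d ⬝ᵥ y) - a * (d ⬝ᵥ y) - c * (1 ⬝ᵥ y)) := by
    linear_combination (q - a) * h_one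
  nlinarith

end Matrix

namespace SimpleGraph

variable {V : Type*} [Fintype V] [DecidableEq V] (G : SimpleGraph V) [DecidableRel G.Adj]

theorem sum_degree_neighborFinset_le (w : V) :
    ∑ u ∈ G.neighborFinset w, (G.degree u : ℝ) ≤
      2 * #G.edgeFinset - G.degree w - (Fintype.card V - 1 - G.degree w) * G.minDegree := by
  have hsum : ∑ u, (G.degree u : ℝ) = 2 * #G.edgeFinset := by
    exact_mod_cast G.sum_degrees_eq_twice_card_edges
  have hsub := Finset.sum_le_sum_of_subset_of_nonneg (subset_univ (insert w (G.neighborFinset w)))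
    (f := fun u => (G.degree u : ℝ) - G.minDegree) fun u _ _ =>
      sub_nonneg.mpr (by exact_mod_cast G.minDegree_le_degree u)
  rw [sum_insert (G.notMem_neighborFinset_self w), sum_sub_distrib, sum_sub_distrib, sum_const,
    sum_const, card_neighborFinset_eq_degree, card_univ, hsum] at hsub
  simp only [nsmul_eq_mul] at hsub
  linarith

end SimpleGraph

section signlessLaplacian

variable {n : ℕ} (G : SimpleGraph (Fin n)) [DecidableRel G.Adj]

theorem signlessLaplacian_eq :
    signlessLaplacian G = diagonal (fun v => (G.degree v : ℝ)) + G.adjMatrix ℝ := by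
  unfold signlessLaplacian
  convert rfl

theorem signlessLaplacian_nonneg (i j : Fin n) : 0 ≤ signlessLaplacian G i j := by
  rw [signlessLaplacian_eq, Matrix.add_apply, diagonal_apply, SimpleGraph.adjMatrix_apply]
  split_ifs <;> positivity

theorem signlessLaplacian_mulVec_one :
    signlessLaplacian G *ᵥ 1 = (2 : ℝ) • fun v => (G.degree v : ℝ) := by
  ext v
  simp [signlessLaplacian_eq, add_mulVec, mulVec_diagonal, two_mul]

theorem signlessLaplacian_mulVec_degree_apply (v : Fin n) :
    (signlessLaplacian G *ᵥ fun u => (G.degree u : ℝ)) v =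
      G.degree v ^ 2 + ∑ u ∈ G.neighborFinset v, (G.degree u : ℝ) := by
  simp [signlessLaplacian_eq, add_mulVec, mulVec_diagonal, sq]

theorem signlessLaplacian_mulVec_degree_le :
    (signlessLaplacian G *ᵥ fun u => (G.degree u : ℝ)) ≤
      ((G.maxDegree + 2 * G.minDegree - 1 : ℝ) • fun u => (G.degree u : ℝ)) +
        (2 * #G.edgeFinset - (n - 1 + G.maxDegree) * G.minDegree : ℝ) • 1 := by
  intro v
  have hmin : (G.minDegree : ℝ) ≤ G.degree v := by exact_mod_cast G.minDegree_le_degree v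
  have hmax : (G.degree v : ℝ) ≤ G.maxDegree := by exact_mod_cast G.degree_le_maxDegree v
  have hnbr := G.sum_degree_neighborFinset_le v
  rw [Fintype.card_fin] at hnbr
  simp only [signlessLaplacian_mulVec_degree_apply, Pi.add_apply, Pi.smul_apply, Pi.one_apply,
    smul_eq_mul, mul_one]
  nlinarith [mul_nonneg (sub_nonneg.mpr hmax) (sub_nonneg.mpr hmin)]

end signlessLaplacian

theorem stmt18 (n : ℕ) (G : SimpleGraph (Fin n)) [DecidableRel G.Adj] :
    qIndex G ^ 2 - ((G.maxDegree : ℝ) + 2 * G.minDegree - 1) * qIndex G -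
        4 * (G.edgeSet.ncard : ℝ) +
        2 * ((n : ℝ) - 1 + G.maxDegree) * G.minDegree ≤ 0 := by
  rcases isEmpty_or_nonempty (Fin n) with _ | _
  · simp [qIndex, SimpleGraph.maxDegree, SimpleGraph.minDegree]
  have hQ := signlessLaplacian_isHermitian G
  obtain ⟨y, hy_nonneg, hy_ne, hQy⟩ :=
    hQ.exists_nonneg_mulVec_eq_iSup_eigenvalues_smul (signlessLaplacian_nonneg G)
  have hm : (G.edgeSet.ncard : ℝ) = #G.edgeFinset := by
    rw [Set.ncard_eq_toFinset_card']; rfl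
  have hbound := hQ.sq_sub_mul_sub_two_mul_nonpos hy_nonneg hy_ne hQy (signlessLaplacian_mulVec_one G)
    (signlessLaplacian_mulVec_degree_le G)
  rw [hm]
  unfold qIndex
  linarith
end
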